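/- Let q be a regular critical weight sequence, μ = μ^q, and let m_1 be the mean of μ_1. There exists a constant β_0 > 0 such that for every sufficiently large n, P_μ( |#∂_0 T − m_1 μ_0(0) n| > n^{3/4} and #T¹ = n ) ≤ exp(−n^{β_0}), where ∂_0 T = {u ∈ T⁰ : k_u(T) = 0} is the set of type-0 leaves of T. -/

import Mathlib

open MeasureTheory Filter Topology
open scoped Classical

noncomputable section

namespace PaperWeill

/-! ### Plane trees, coded as finite sets of words over `ℕ = {1,2,…}` -/

/-- The number of children `k_u(T)` of the vertex `u` in the finite set of words `T`. -/
def childCount (T : Finset (List ℕ)) (u : List ℕ) : ℕ :=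
  (T.filter fun v => v ≠ [] ∧ v.dropLast = u).card

/-- `T` is a plane tree: it contains the root, is stable under taking fathers, uses only
letters `≥ 1`, and the children of `u` are exactly `u1, …, u k_u(T)`. -/
def IsPlaneTree (T : Finset (List ℕ)) : Prop :=
  [] ∈ T ∧ (∀ (u : List ℕ) (j : ℕ), u ++ [j] ∈ T → u ∈ T) ∧
    (∀ v ∈ T, ∀ i ∈ v, 1 ≤ i) ∧
    ∀ u ∈ T, ∀ j : ℕ, (u ++ [j] ∈ T ↔ 1 ≤ j ∧ j ≤ childCount T u)

/-- Vertices of type 0 (even generation). -/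
def type0 (T : Finset (List ℕ)) : Finset (List ℕ) := T.filter fun v => Even v.length

/-- Vertices of type 1 (odd generation). -/
def type1 (T : Finset (List ℕ)) : Finset (List ℕ) := T.filter fun v => ¬ Even v.length

/-- `#T¹`. -/
def t1card (T : Finset (List ℕ)) : ℕ := (type1 T).card

/-- The `P_μ`-weight of an individual plane tree. -/
def treeWt (μ₀ μ₁ : ℕ → ℝ) (T : Finset (List ℕ)) : ℝ :=
  ∏ u ∈ T, if Even u.length then μ₀ (childCount T u) else μ₁ (childCount T u)

/-- `P_μ(E)`, the probability of an event `E` under the two-type Galton-Watson law. -/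
def tP (μ₀ μ₁ : ℕ → ℝ) (E : Finset (List ℕ) → Prop) : ℝ :=
  ∑' T : Finset (List ℕ), if IsPlaneTree T ∧ E T then treeWt μ₀ μ₁ T else 0

/-- conditional probability `P_μ(E ∣ F)`. -/
def tCond (μ₀ μ₁ : ℕ → ℝ) (E F : Finset (List ℕ) → Prop) : ℝ :=
  tP μ₀ μ₁ (fun T => E T ∧ F T) / tP μ₀ μ₁ F

/-! ### Regular critical weight sequences -/

/-- `N(k) = C(2k-1, k-1)`. -/
def Ncoef (k : ℕ) : ℕ := (2 * k - 1).choose (k - 1)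

/-- `f_q(x) = Σ_k N(k+1) q_{k+1} x^k`. -/
def fq (q : ℕ → ℝ) (x : ℝ) : ℝ := ∑' k : ℕ, (Ncoef (k + 1) : ℝ) * q (k + 1) * x ^ k

/-- The derivative series `f_q'(x) = Σ_k k N(k+1) q_{k+1} x^{k-1}`. -/
def fq' (q : ℕ → ℝ) (x : ℝ) : ℝ :=
  ∑' k : ℕ, (k : ℝ) * (Ncoef (k + 1) : ℝ) * q (k + 1) * x ^ (k - 1)

/-- `q` is a regular critical weight sequence with distinguished solution `Z = Z_q`. -/
structure RegCrit (q : ℕ → ℝ) (Z : ℝ) : Prop where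
  nonneg : ∀ i, 0 ≤ q i
  some_pos : ∃ i, 2 ≤ i ∧ 0 < q i
  Zpos : 0 < Z
  fixedPoint : fq q Z = 1 - 1 / Z
  critical : Z ^ 2 * fq' q Z = 1
  regular : ∃ R, Z < R ∧ Summable fun k : ℕ => (Ncoef (k + 1) : ℝ) * q (k + 1) * R ^ k

/-- `μ₀^q`, the geometric distribution with parameter `f_q(Z_q)`. -/
def mu0 (q : ℕ → ℝ) (Z : ℝ) (k : ℕ) : ℝ := Z⁻¹ * fq q Z ^ k

/-- `μ₁^q(k) = Z^k N(k+1) q_{k+1} / f_q(Z)`. -/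
def mu1 (q : ℕ → ℝ) (Z : ℝ) (k : ℕ) : ℝ := Z ^ k * (Ncoef (k + 1) : ℝ) * q (k + 1) / fq q Z

/-- The mean `m₁` of `μ₁^q`. -/
def meanMu1 (q : ℕ → ℝ) (Z : ℝ) : ℝ := ∑' k : ℕ, (k : ℝ) * mu1 q Z k

/-! ### Spatial trees -/

/-- `(x_1,…,x_k) ∈ A_k`. -/
def vecInA (k : ℕ) (x : ℕ → ℤ) : Prop :=
  1 ≤ k → (-1 ≤ x 1 ∧ x k ≤ 1 ∧ ∀ j : ℕ, 1 ≤ j → j < k → -1 ≤ x (j + 1) - x j)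

/-- Admissibility of the displacement field `D` on the tree `T` (`D v = U_v - U_{v̌}`):
children of type-0 vertices get displacement `0` (the Dirac mass `ν₀`), and around each
type-1 vertex the displacement vector lies in `A_k` (uniform law `ν₁^k`), or in its
reversal if `rev = true` (law `ν̃₁^k`). -/
def dispOK (rev : Bool) (T : Finset (List ℕ)) (D : List ℕ →₀ ℤ) : Prop :=
  (∀ v : List ℕ, D v ≠ 0 → v ∈ T ∧ v ≠ [] ∧ ¬ Even v.dropLast.length) ∧
    ∀ u ∈ T, ¬ Even u.length →
      vecInA (childCount T u)
        fun j => if rev then D (u ++ [childCount T u + 1 - j]) else D (u ++ [j])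

/-- The `ℙ_{μ,ν,x}`-weight of an individual spatial tree `(T, D)`. -/
def spatialWt (μ₀ μ₁ : ℕ → ℝ) (rev : Bool) (T : Finset (List ℕ)) (D : List ℕ →₀ ℤ) : ℝ :=
  if IsPlaneTree T ∧ dispOK rev T D then
    treeWt μ₀ μ₁ T * ∏ u ∈ type1 T, ((Ncoef (childCount T u + 1) : ℝ))⁻¹
  else 0

/-- The label function determined by the initial value `x` and the displacements `D`. -/
def labelOf (x : ℝ) (D : List ℕ →₀ ℤ) (v : List ℕ) : ℝ :=
  x + ∑ i ∈ Finset.range v.length, ((D (v.take (i + 1)) : ℤ) : ℝ)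

/-- Expectation `𝔼_{μ,ν,x}[F(T,U)]` (with `ν̃` in place of `ν` if `rev = true`). -/
def sE (μ₀ μ₁ : ℕ → ℝ) (rev : Bool) (x : ℝ)
    (F : Finset (List ℕ) → (List ℕ → ℝ) → ℝ) : ℝ :=
  ∑' p : Finset (List ℕ) × (List ℕ →₀ ℤ),
    F p.1 (labelOf x p.2) * spatialWt μ₀ μ₁ rev p.1 p.2

/-- `ℙ_{μ,ν,x}(E)`. -/
def sP (μ₀ μ₁ : ℕ → ℝ) (rev : Bool) (x : ℝ)
    (E : Finset (List ℕ) → (List ℕ → ℝ) → Prop) : ℝ :=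
  sE μ₀ μ₁ rev x fun T U => if E T U then 1 else 0

/-- Conditional expectation `𝔼_{μ,ν,x}[F ∣ G]`. -/
def sCondE (μ₀ μ₁ : ℕ → ℝ) (rev : Bool) (x : ℝ)
    (F : Finset (List ℕ) → (List ℕ → ℝ) → ℝ)
    (G : Finset (List ℕ) → (List ℕ → ℝ) → Prop) : ℝ :=
  sE μ₀ μ₁ rev x (fun T U => if G T U then F T U else 0) / sP μ₀ μ₁ rev x G

/-- Conditional probability `ℙ_{μ,ν,x}(E ∣ G)`. -/
def sCondP (μ₀ μ₁ : ℕ → ℝ) (rev : Bool) (x : ℝ)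
    (E G : Finset (List ℕ) → (List ℕ → ℝ) → Prop) : ℝ :=
  sP μ₀ μ₁ rev x (fun T U => E T U ∧ G T U) / sP μ₀ μ₁ rev x G

/-! ### Distinguished vertices -/

/-- `∂₀T`, the type-0 leaves of `T`. -/
def leaves0 (T : Finset (List ℕ)) : Finset (List ℕ) :=
  T.filter fun v => Even v.length ∧ childCount T v = 0

/-- `min{U_w : w ∈ T}`. -/
def minLabel (T : Finset (List ℕ)) (U : List ℕ → ℝ) : ℝ := sInf (U '' ↑T)

/-- `Δ₀`, the set of type-0 vertices with minimal label. -/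
def Delta0 (T : Finset (List ℕ)) (U : List ℕ → ℝ) : Finset (List ℕ) :=
  T.filter fun v => Even v.length ∧ U v = minLabel T U

/-- Strict lexicographical order on words. -/
def lexLt (u v : List ℕ) : Prop := List.Lex (· < ·) u v

/-- `v` is the first element of `Δ₀` in lexicographical order. -/
def IsFirstMin (T : Finset (List ℕ)) (U : List ℕ → ℝ) (v : List ℕ) : Prop :=
  v ∈ Delta0 T U ∧ ∀ w ∈ Delta0 T U, w ≠ v → lexLt v w

/-- `v_m`, the first element of `Δ₀` in lexicographical order. -/
def vmin (T : Finset (List ℕ)) (U : List ℕ → ℝ) : List ℕ :=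
  if h : ∃ v, IsFirstMin T U v then h.choose else []

/-- `U̲ > 0` : all labels of type-0 vertices other than the root are positive
(vacuously true if there are none, following the convention `min ∅ = ∞`). -/
def UnderbarPos (T : Finset (List ℕ)) (U : List ℕ → ℝ) : Prop :=
  ∀ v ∈ T, v ≠ [] → Even v.length → 0 < U v

/-- `U̲ ≥ 0`. -/
def UnderbarNonneg (T : Finset (List ℕ)) (U : List ℕ → ℝ) : Prop :=
  ∀ v ∈ T, v ≠ [] → Even v.length → 0 ≤ U v

/-! ### Contour function and re-rooting -/

/-- One step of the contour walk: from `cur`, having arrived from `prev`. -/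
def cnext (T : Finset (List ℕ)) (prev cur : List ℕ) : List ℕ :=
  if prev.length = cur.length + 1 then
    if prev.getLastD 0 < childCount T cur then cur ++ [prev.getLastD 0 + 1] else cur.dropLast
  else if 1 ≤ childCount T cur then cur ++ [1] else cur.dropLast

/-- The search-depth sequence `u_0, u_1, …, u_{2ζ}` of `T`. -/
def contourSeq (T : Finset (List ℕ)) : List (List ℕ) :=
  ((List.range (2 * T.card - 2)).foldl
    (fun acc _ => cnext T (acc.tail.headD (acc.headD [])) (acc.headD []) :: acc) [[]]).reverse

/-- The contour function of `T` at integer times. -/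
def contourHt (T : Finset (List ℕ)) (i : ℕ) : ℤ := (((contourSeq T).getD i []).length : ℤ)

/-- `[[k - t]]`, the representative modulo `2ζ` in `[0, 2ζ)`, where `k` is the time of the
first visit of `v₀`. -/
def wrapIdx (T : Finset (List ℕ)) (v₀ : List ℕ) (t : ℕ) : ℕ :=
  ((((contourSeq T).idxOf v₀ : ℤ) - (t : ℤ)) % (((contourSeq T).length : ℤ) - 1)).toNat

/-- The re-rooted contour function
`Ĉ^{(v₀)}(t) = C(k) + C([[k-t]]) - 2 inf_{s} C(s)`. -/
def Chat (T : Finset (List ℕ)) (v₀ : List ℕ) (t : ℕ) : ℤ :=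
  let k := (contourSeq T).idxOf v₀
  let m := wrapIdx T v₀ t
  contourHt T k + contourHt T m -
    2 * (Finset.Icc (min k m) (max k m)).inf' (Finset.nonempty_Icc.mpr min_le_max) (contourHt T)

/-- `2ζ - (l - k)`, the length of the time interval of the re-rooted contour. -/
def rerootLen (T : Finset (List ℕ)) (v₀ : List ℕ) : ℕ :=
  let cs := contourSeq T
  (cs.length - 1) - ((cs.length - 1 - cs.reverse.idxOf v₀) - cs.idxOf v₀)

/-- The successive heights `Ĉ^{(v₀)}(1), …, Ĉ^{(v₀)}(2ζ - (l-k))` of the re-rooted contour. -/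
def rerootHeights (T : Finset (List ℕ)) (v₀ : List ℕ) : List ℕ :=
  (List.range (rerootLen T v₀)).map fun t => (Chat T v₀ (t + 1)).toNat

/-- One step of the reconstruction of a plane tree from the list of heights of its contour
function; the state is (current vertex, vertices built so far, visit sequence so far). -/
def buildStep (st : List ℕ × Finset (List ℕ) × List (List ℕ)) (h : ℕ) :
    List ℕ × Finset (List ℕ) × List (List ℕ) :=
  if h = st.1.length + 1 then
    (st.1 ++ [childCount st.2.1 st.1 + 1],
      insert (st.1 ++ [childCount st.2.1 st.1 + 1]) st.2.1,
      st.2.2 ++ [st.1 ++ [childCount st.2.1 st.1 + 1]])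
  else (st.1.dropLast, st.2.1, st.2.2 ++ [st.1.dropLast])

/-- The re-rooted tree `T̂^{(v₀)}`: the unique plane tree whose contour function is
`Ĉ^{(v₀)}`, reconstructed from its list of heights. -/
def reroot (T : Finset (List ℕ)) (v₀ : List ℕ) : Finset (List ℕ) :=
  ((rerootHeights T v₀).foldl buildStep ([], {[]}, [[]])).2.1

/-- The search-depth sequence of the re-rooted tree `T̂^{(v₀)}`. -/
def rerootVisits (T : Finset (List ℕ)) (v₀ : List ℕ) : List (List ℕ) :=
  ((rerootHeights T v₀).foldl buildStep ([], {[]}, [[]])).2.2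

/-- The re-rooted labels `Û^{(v₀)}` : for `v` of type 0, `Û^{(v₀)}_v = U_{v̄} - U_{v₀}` where
`v̄` is the vertex of `T` corresponding to `v`, and `Û^{(v₀)}_v = Û^{(v₀)}_{v̌}` for `v` of
type 1. -/
def rerootLabel (T : Finset (List ℕ)) (U : List ℕ → ℝ) (v₀ v : List ℕ) : ℝ :=
  let w := if Even v.length then v else v.dropLast
  U ((contourSeq T).getD (wrapIdx T v₀ ((rerootVisits T v₀).idxOf w)) []) - U v₀

/-- `T^{(w₀)}`, the tree `T` with the strict descendants of `w₀` removed. -/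
def truncateAt (T : Finset (List ℕ)) (w₀ : List ℕ) : Finset (List ℕ) :=
  T.filter fun v => ¬(w₀ <+: v ∧ v ≠ w₀)

/-! ### The processes `J` and `K` -/

/-- `J_T(n)`, the number of type-0 vertices among the `n+1` lexicographically first
vertices of `T`. -/
def Jfun (T : Finset (List ℕ)) (n : ℕ) : ℕ :=
  (T.filter fun v => Even v.length ∧ (T.filter fun w => lexLt w v).card ≤ n).card

/-- `J̄_T(t) = J_T(ζ t) / #T⁰`. -/
def Jbar (T : Finset (List ℕ)) (t : ℝ) : ℝ :=
  (Jfun T ⌊((T.card - 1 : ℕ) : ℝ) * t⌋₊ : ℝ) / ((type0 T).card : ℝ)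

/-- The contour function at integer times, with values in `ℕ`. -/
def Cfn (T : Finset (List ℕ)) (l : ℕ) : ℕ := ((contourSeq T).getD l []).length

/-- `K_T(k) = 1 + #{l ∈ {1,…,k} : C(l) = max_{[l-1,l]} C and C(l) even}`. -/
def Kfun (T : Finset (List ℕ)) (k : ℕ) : ℕ :=
  1 + ((Finset.Icc 1 k).filter fun l => Cfn T (l - 1) ≤ Cfn T l ∧ Even (Cfn T l)).card

/-- `K̄_T(t) = K_T(2ζ t) / #T⁰`. -/
def Kbar (T : Finset (List ℕ)) (t : ℝ) : ℝ :=
  (Kfun T ⌊((2 * (T.card - 1) : ℕ) : ℝ) * t⌋₊ : ℝ) / ((type0 T).card : ℝ)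

/-!
Tilting the type-0 offspring law, `μ₀(k) ↦ μ₀(k) e^{a [k = 0] + b k}`, multiplies the weight of
a tree by `exp (a #∂₀T + b #T¹)`, since `#∂₀T` counts the type-0 vertices without children and
`#T¹` is the total number of children of type-0 vertices. If the tilted offspring laws still have
mass at most one, so does the tilted law on trees (root decomposition and induction on the size
of the tree), and Markov's inequality gives `P_μ(a #∂₀T + b #T¹ ≥ s) ≤ e^{-s}`.

For the geometric law `μ₀(k) = p (1-p)^k`, `p = 1/Z_q`, the tilt `b` which keeps mass one is
explicit and equals `-c a + O(a²)` with `c = p²/(1-p)`, and criticality gives `c = m₁ μ₀(0)`.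
Hence `P_μ(±(#∂₀T - c n) > t, #T¹ = n) ≤ exp (-λ t + O(λ² n))`; the choice `λ ≍ n^{-1/4}`,
`t = n^{3/4}` makes this `exp (-Ω(√n))`.
-/

open scoped ENNReal

def childSubtree (j : ℕ) (T : Finset (List ℕ)) : Finset (List ℕ) :=
  (T.filter fun v => v.head? = some j).image List.tail

theorem mem_childSubtree {T : Finset (List ℕ)} {j : ℕ} {w : List ℕ} :
    w ∈ childSubtree j T ↔ j :: w ∈ T := by
  simp only [childSubtree, Finset.mem_image, Finset.mem_filter]
  constructor
  · rintro ⟨_ | ⟨a, v⟩, ⟨hv, hh⟩, rfl⟩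
    · simp at hh
    · simp only [List.head?_cons, Option.some.injEq] at hh
      exact hh ▸ hv
  · exact fun h => ⟨j :: w, ⟨h, rfl⟩, rfl⟩

theorem childCount_childSubtree (T : Finset (List ℕ)) (j : ℕ) (w : List ℕ) :
    childCount (childSubtree j T) w = childCount T (j :: w) := by
  refine Finset.card_bij (fun x _ => j :: x) ?_ (fun _ _ _ _ h => List.cons_injective h) ?_
  · rintro (_ | ⟨y, ys⟩) hx <;> simp only [Finset.mem_filter] at hx ⊢
    · exact absurd rfl hx.2.1
    · exact ⟨mem_childSubtree.mp hx.1, by simp, by rw [List.dropLast_cons_cons, hx.2.2]⟩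
  · rintro (_ | ⟨a, _ | ⟨b, t⟩⟩) hv <;> simp only [Finset.mem_filter] at hv
    · exact absurd rfl hv.2.1
    · simp at hv
    · rw [List.dropLast_cons_cons, List.cons.injEq] at hv
      obtain ⟨hv, -, rfl, hdl⟩ := hv
      exact ⟨b :: t, Finset.mem_filter.mpr ⟨mem_childSubtree.mpr hv, by simp, hdl⟩, rfl⟩

namespace IsPlaneTree

variable {T : Finset (List ℕ)}

theorem singleton_head_mem (hT : IsPlaneTree T) {a : ℕ} {w : List ℕ} (h : a :: w ∈ T) :
    [a] ∈ T := by
  induction w using List.reverseRecOn with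
  | nil => exact h
  | append_singleton w i ih => exact ih (hT.2.1 (a :: w) i (by simpa using h))

theorem root_child_mem_iff (hT : IsPlaneTree T) (j : ℕ) :
    [j] ∈ T ↔ 1 ≤ j ∧ j ≤ childCount T [] := by
  simpa using hT.2.2.2 [] hT.1 j

theorem isPlaneTree_childSubtree (hT : IsPlaneTree T) {j : ℕ}
    (hj : 1 ≤ j ∧ j ≤ childCount T []) : IsPlaneTree (childSubtree j T) := by
  refine ⟨mem_childSubtree.mpr ((hT.root_child_mem_iff j).mpr hj), fun u i h => ?_,
    fun v hv i hi => hT.2.2.1 (j :: v) (mem_childSubtree.mp hv) i (List.mem_cons_of_mem _ hi),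
    fun u hu i => ?_⟩
  · exact mem_childSubtree.mpr (hT.2.1 (j :: u) i (by simpa using mem_childSubtree.mp h))
  · rw [mem_childSubtree, childCount_childSubtree, ← List.cons_append]
    exact hT.2.2.2 (j :: u) (mem_childSubtree.mp hu) i

theorem card_childSubtree_lt (hT : IsPlaneTree T) (j : ℕ) :
    (childSubtree j T).card < T.card := by
  refine Finset.card_image_le.trans_lt (Finset.card_lt_card ⟨Finset.filter_subset _ _, ?_⟩)
  intro h
  simpa using Finset.mem_filter.mp (h hT.1)

theorem eq_insert_biUnion (hT : IsPlaneTree T) :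
    T = insert [] ((Finset.range (childCount T [])).biUnion
      fun i => (childSubtree (i + 1) T).image ((i + 1) :: ·)) := by
  ext (_ | ⟨a, w⟩)
  · simpa using hT.1
  · simp only [Finset.mem_insert, reduceCtorEq, false_or, Finset.mem_biUnion, Finset.mem_range,
      Finset.mem_image, List.cons.injEq, mem_childSubtree]
    constructor
    · intro h
      have ha := (hT.root_child_mem_iff a).mp (hT.singleton_head_mem h)
      exact ⟨a - 1, by omega, w, by rwa [Nat.sub_add_cancel ha.1], by omega, rfl⟩
    · rintro ⟨i, -, w, hw, rfl, rfl⟩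
      exact hw

theorem ext_childSubtree {T' : Finset (List ℕ)} (hT : IsPlaneTree T) (hT' : IsPlaneTree T')
    (hk : childCount T [] = childCount T' [])
    (hsub : ∀ i < childCount T [], childSubtree (i + 1) T =
      childSubtree (i + 1) T') : T = T' := by
  rw [hT.eq_insert_biUnion, hT'.eq_insert_biUnion, ← hk]
  congr 1
  exact Finset.biUnion_congr rfl fun i hi => by rw [hsub i (Finset.mem_range.mp hi)]

end IsPlaneTree

def ennTreeWt (g₀ g₁ : ℕ → ℝ≥0∞) (T : Finset (List ℕ)) : ℝ≥0∞ :=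
  ∏ u ∈ T, if Even u.length then g₀ (childCount T u) else g₁ (childCount T u)

theorem IsPlaneTree.ennTreeWt_eq {T : Finset (List ℕ)} (hT : IsPlaneTree T)
    (g₀ g₁ : ℕ → ℝ≥0∞) :
    ennTreeWt g₀ g₁ T = g₀ (childCount T []) *
      ∏ i ∈ Finset.range (childCount T []), ennTreeWt g₁ g₀ (childSubtree (i + 1) T) := by
  have hroot : ([] : List ℕ) ∉ (Finset.range (childCount T [])).biUnion
      fun i => (childSubtree (i + 1) T).image ((i + 1) :: ·) := by simp
  rw [ennTreeWt, hT.eq_insert_biUnion, Finset.prod_insert hroot, ← hT.eq_insert_biUnion,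
    Finset.prod_biUnion]
  · simp only [List.length_nil, Even.zero, if_true]
    congr 1
    refine Finset.prod_congr rfl fun i _ => ?_
    rw [Finset.prod_image fun _ _ _ _ h => List.cons_injective h]
    refine Finset.prod_congr rfl fun w _ => ?_
    simp only [List.length_cons, Nat.even_add_one, childCount_childSubtree]
    split_ifs <;> rfl
  · intro i _ i' _ hne
    simp only [Function.onFun, Finset.disjoint_left, Finset.mem_image]
    rintro _ ⟨w, -, rfl⟩ ⟨w', -, h⟩
    exact hne (Nat.succ_injective (List.cons.inj h).1).symm

theorem tsum_fin_pi_prod_eq_pow {β : Type*} (F : β → ℝ≥0∞) (k : ℕ) :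
    ∑' t : Fin k → β, ∏ j, F (t j) = (∑' b, F b) ^ k := by
  induction k with
  | zero => simp
  | succ k ih =>
    rw [← (Fin.consEquiv fun _ => β).tsum_eq, ENNReal.tsum_prod', pow_succ', ← ih,
      ← ENNReal.tsum_mul_right]
    refine tsum_congr fun b => ?_
    rw [← ENNReal.tsum_mul_left]
    refine tsum_congr fun t => ?_
    simp [Fin.consEquiv, Fin.prod_univ_succ]

theorem tsum_ennTreeWt_card_succ_le (C : ℕ) (g₀ g₁ : ℕ → ℝ≥0∞) :
    ∑' T : Finset (List ℕ), (if IsPlaneTree T ∧ T.card ≤ C + 1 then ennTreeWt g₀ g₁ T else 0)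
      ≤ ∑' k, g₀ k * (∑' S : Finset (List ℕ),
        if IsPlaneTree S ∧ S.card ≤ C then ennTreeWt g₁ g₀ S else 0) ^ k := by
  set P : Set (Finset (List ℕ)) := {T | IsPlaneTree T ∧ T.card ≤ C + 1}
  set W : Finset (List ℕ) → ℝ≥0∞ := fun S =>
    if IsPlaneTree S ∧ S.card ≤ C then ennTreeWt g₁ g₀ S else 0
  set g : (Σ k : ℕ, Fin k → Finset (List ℕ)) → ℝ≥0∞ := fun σ => g₀ σ.1 * ∏ i, W (σ.2 i)
  set Φ : P → (Σ k : ℕ, Fin k → Finset (List ℕ)) := fun T =>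
    ⟨childCount T.1 [], fun i => childSubtree (i.1 + 1) T.1⟩
  have hΦ : Function.Injective Φ := by
    rintro ⟨T, hT, _⟩ ⟨T', hT', _⟩ h
    have hk : childCount T [] = childCount T' [] := congrArg Sigma.fst h
    refine Subtype.ext (hT.ext_childSubtree hT' hk fun i hi => ?_)
    have := congrArg (fun σ : Σ k : ℕ, Fin k → Finset (List ℕ) =>
      if hlt : i < σ.1 then σ.2 ⟨i, hlt⟩ else ∅) h
    simpa [Φ, hi, hk ▸ hi] using this
  have hg : ∀ T : P, ennTreeWt g₀ g₁ T.1 = g (Φ T) := by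
    rintro ⟨T, hT, hcard⟩
    simp only [g, Φ, W]
    rw [hT.ennTreeWt_eq, ← Fin.prod_univ_eq_prod_range]
    refine congrArg _ (Finset.prod_congr rfl fun i _ => (if_pos ⟨?_, ?_⟩).symm)
    · exact hT.isPlaneTree_childSubtree ⟨by omega, i.2⟩
    · have := hT.card_childSubtree_lt (i.1 + 1)
      omega
  calc _ = ∑' T : P, ennTreeWt g₀ g₁ T.1 := by
        rw [tsum_subtype]
        exact tsum_congr fun T => by simp only [Set.indicator, P, Set.mem_ofPred_eq]; congr
    _ = ∑' T : P, g (Φ T) := tsum_congr hg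
    _ ≤ ∑' σ, g σ := ENNReal.tsum_comp_le_tsum_of_injective hΦ g
    _ = _ := by
        rw [ENNReal.tsum_sigma']
        refine tsum_congr fun k => ?_
        simp only [g]
        rw [ENNReal.tsum_mul_left, tsum_fin_pi_prod_eq_pow]

theorem tsum_ennTreeWt_card_le_le (C : ℕ) {g₀ g₁ : ℕ → ℝ≥0∞} {y₀ y₁ : ℝ≥0∞}
    (h₀ : ∑' k, g₀ k * y₁ ^ k ≤ y₀) (h₁ : ∑' k, g₁ k * y₀ ^ k ≤ y₁) :
    ∑' T : Finset (List ℕ), (if IsPlaneTree T ∧ T.card ≤ C then ennTreeWt g₀ g₁ T else 0)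
      ≤ y₀ := by
  induction C generalizing g₀ g₁ y₀ y₁ with
  | zero =>
    refine le_of_eq_of_le (ENNReal.tsum_eq_zero.mpr fun T => if_neg ?_) zero_le
    rintro ⟨hT, hc⟩
    exact Finset.card_ne_zero_of_mem hT.1 (Nat.le_zero.mp hc)
  | succ C ih =>
    calc _ ≤ _ := tsum_ennTreeWt_card_succ_le C g₀ g₁
      _ ≤ ∑' k, g₀ k * y₁ ^ k := by
          gcongr
          exact ih h₁ h₀
      _ ≤ y₀ := h₀

theorem tsum_ennTreeWt_le {g₀ g₁ : ℕ → ℝ≥0∞} {y₀ y₁ : ℝ≥0∞}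
    (h₀ : ∑' k, g₀ k * y₁ ^ k ≤ y₀) (h₁ : ∑' k, g₁ k * y₀ ^ k ≤ y₁) :
    ∑' T : Finset (List ℕ), (if IsPlaneTree T then ennTreeWt g₀ g₁ T else 0) ≤ y₀ := by
  rw [ENNReal.tsum_eq_iSup_sum]
  refine iSup_le fun s => le_trans ?_ (tsum_ennTreeWt_card_le_le (s.sup Finset.card) h₀ h₁)
  refine le_trans (Finset.sum_le_sum fun T hT => ?_) (ENNReal.sum_le_tsum s)
  by_cases hp : IsPlaneTree T
  · rw [if_pos hp, if_pos ⟨hp, Finset.le_sup hT⟩]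
  · rw [if_neg hp]
    exact zero_le

theorem IsPlaneTree.sum_childCount_type0 {T : Finset (List ℕ)} (hT : IsPlaneTree T) :
    ∑ v ∈ type0 T, childCount T v = t1card T := by
  have hmaps : ∀ w ∈ type1 T, w.dropLast ∈ type0 T := by
    intro w hw
    simp only [type0, type1, Finset.mem_filter] at hw ⊢
    rcases List.eq_nil_or_concat' w with rfl | ⟨u, a, rfl⟩
    · simp at hw
    · rw [List.dropLast_concat]
      exact ⟨hT.2.1 u a hw.1, by simpa [Nat.even_add_one] using hw.2⟩
  rw [t1card, Finset.card_eq_sum_card_fiberwise hmaps]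
  refine Finset.sum_congr rfl fun v hv => ?_
  rw [childCount, type1, Finset.filter_filter]
  refine congrArg _ (Finset.filter_congr fun w _ => ?_)
  have hv : Even v.length := (Finset.mem_filter.mp hv).2
  rcases List.eq_nil_or_concat' w with rfl | ⟨u, a, rfl⟩
  · simp
  · simp only [List.dropLast_concat, List.length_append, List.length_singleton,
      Nat.even_add_one, not_not, ne_eq, List.append_eq_nil_iff, reduceCtorEq, and_false,
      not_false_eq_true, true_and]
    exact ⟨fun h => ⟨h ▸ hv, h⟩, And.right⟩

def tilt0 (μ₀ : ℕ → ℝ) (a b : ℝ) (k : ℕ) : ℝ :=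
  μ₀ k * Real.exp ((if k = 0 then a else 0) + b * k)

theorem IsPlaneTree.treeWt_tilt0 {T : Finset (List ℕ)} (hT : IsPlaneTree T)
    (μ₀ μ₁ : ℕ → ℝ) (a b : ℝ) :
    treeWt (tilt0 μ₀ a b) μ₁ T =
      treeWt μ₀ μ₁ T * Real.exp (a * (leaves0 T).card + b * t1card T) := by
  have hexp : ∑ v ∈ type0 T, ((if childCount T v = 0 then a else 0) + b * childCount T v) =
      a * (leaves0 T).card + b * t1card T := by
    rw [Finset.sum_add_distrib, Finset.sum_ite, Finset.sum_const_zero, Finset.sum_const,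
      ← Finset.mul_sum, ← hT.sum_childCount_type0, leaves0, type0, Finset.filter_filter]
    push_cast
    ring
  simp only [treeWt, Finset.prod_ite, tilt0, Finset.prod_mul_distrib, ← Real.exp_sum]
  rw [← type0, ← type1, hexp]
  ring

theorem treeWt_nonneg {μ₀ μ₁ : ℕ → ℝ} (h₀ : ∀ k, 0 ≤ μ₀ k) (h₁ : ∀ k, 0 ≤ μ₁ k)
    (T : Finset (List ℕ)) : 0 ≤ treeWt μ₀ μ₁ T :=
  Finset.prod_nonneg fun u _ => by split_ifs; exacts [h₀ _, h₁ _]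

theorem ofReal_treeWt {μ₀ μ₁ : ℕ → ℝ} (h₀ : ∀ k, 0 ≤ μ₀ k) (h₁ : ∀ k, 0 ≤ μ₁ k)
    (T : Finset (List ℕ)) :
    ENNReal.ofReal (treeWt μ₀ μ₁ T) =
      ennTreeWt (fun k => ENNReal.ofReal (μ₀ k)) (fun k => ENNReal.ofReal (μ₁ k)) T := by
  rw [treeWt, ennTreeWt, ENNReal.ofReal_prod_of_nonneg fun u _ => by split_ifs; exacts [h₀ _, h₁ _]]
  exact Finset.prod_congr rfl fun u _ => by split_ifs <;> rfl

theorem tsum_ofReal_le_one {f : ℕ → ℝ} (hf : ∀ k, 0 ≤ f k) (hs : Summable f)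
    (h1 : ∑' k, f k ≤ 1) : ∑' k, ENNReal.ofReal (f k) ≤ 1 := by
  rw [← ENNReal.ofReal_tsum_of_nonneg hf hs]
  exact ENNReal.ofReal_le_one.mpr h1

theorem tsum_ofReal_treeWt_le_one {μ₀ μ₁ : ℕ → ℝ} (h₀ : ∀ k, 0 ≤ μ₀ k) (h₁ : ∀ k, 0 ≤ μ₁ k)
    (hs₀ : Summable μ₀) (hs₀1 : ∑' k, μ₀ k ≤ 1) (hs₁ : Summable μ₁) (hs₁1 : ∑' k, μ₁ k ≤ 1) :
    ∑' T : Finset (List ℕ),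
      (if IsPlaneTree T then ENNReal.ofReal (treeWt μ₀ μ₁ T) else 0) ≤ 1 := by
  simp_rw [ofReal_treeWt h₀ h₁]
  exact tsum_ennTreeWt_le (y₁ := 1) (by simpa using tsum_ofReal_le_one h₀ hs₀ hs₀1)
    (by simpa using tsum_ofReal_le_one h₁ hs₁ hs₁1)

theorem tP_eq_toReal (μ₀ μ₁ : ℕ → ℝ) (h₀ : ∀ k, 0 ≤ μ₀ k) (h₁ : ∀ k, 0 ≤ μ₁ k)
    (E : Finset (List ℕ) → Prop) :
    tP μ₀ μ₁ E = (∑' T : Finset (List ℕ),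
      if IsPlaneTree T ∧ E T then ENNReal.ofReal (treeWt μ₀ μ₁ T) else 0).toReal := by
  rw [ENNReal.tsum_toReal_eq fun T => by split_ifs <;> simp, tP]
  refine tsum_congr fun T => ?_
  split_ifs
  · exact (ENNReal.toReal_ofReal (treeWt_nonneg h₀ h₁ T)).symm
  · rfl

theorem tP_le_sum_exp_neg {μ₀ μ₁ : ℕ → ℝ} {ι : Type*} (I : Finset ι) (a b s : ι → ℝ)
    {E : Finset (List ℕ) → Prop} (h₀ : ∀ k, 0 ≤ μ₀ k) (h₁ : ∀ k, 0 ≤ μ₁ k)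
    (hs₁ : Summable μ₁) (hs₁1 : ∑' k, μ₁ k ≤ 1)
    (htilt : ∀ i ∈ I, Summable (tilt0 μ₀ (a i) (b i)) ∧ ∑' k, tilt0 μ₀ (a i) (b i) k ≤ 1)
    (hE : ∀ T, IsPlaneTree T → E T →
      ∃ i ∈ I, s i ≤ a i * (leaves0 T).card + b i * t1card T) :
    tP μ₀ μ₁ E ≤ ∑ i ∈ I, Real.exp (-s i) := by
  have ht₀ : ∀ i k, 0 ≤ tilt0 μ₀ (a i) (b i) k := fun i k =>
    mul_nonneg (h₀ k) (Real.exp_pos _).le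
  have hpt : ∀ T, (if IsPlaneTree T ∧ E T then ENNReal.ofReal (treeWt μ₀ μ₁ T) else 0) ≤
      ∑ i ∈ I, ENNReal.ofReal (Real.exp (-s i)) *
        (if IsPlaneTree T then ENNReal.ofReal (treeWt (tilt0 μ₀ (a i) (b i)) μ₁ T) else 0) := by
    intro T
    split_ifs with hTE hT
    · obtain ⟨i, hi, hsi⟩ := hE T hTE.1 hTE.2
      refine le_trans ?_ (Finset.single_le_sum (fun j _ => zero_le) hi)
      rw [← ENNReal.ofReal_mul (Real.exp_pos _).le, hTE.1.treeWt_tilt0,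
        mul_left_comm, ← Real.exp_add]
      refine ENNReal.ofReal_le_ofReal (le_mul_of_one_le_right (treeWt_nonneg h₀ h₁ T) ?_)
      exact Real.one_le_exp (by linarith)
    · exact absurd hTE.1 hT
    · exact zero_le
    · exact zero_le
  rw [tP_eq_toReal μ₀ μ₁ h₀ h₁]
  refine ENNReal.toReal_le_of_le_ofReal (Finset.sum_nonneg fun i _ => (Real.exp_pos _).le) ?_
  calc _ ≤ ∑' T, ∑ i ∈ I, ENNReal.ofReal (Real.exp (-s i)) *
        (if IsPlaneTree T then ENNReal.ofReal (treeWt (tilt0 μ₀ (a i) (b i)) μ₁ T) else 0) :=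
        ENNReal.tsum_le_tsum hpt
    _ ≤ ∑ i ∈ I, ENNReal.ofReal (Real.exp (-s i)) * 1 := by
        rw [Summable.tsum_finsetSum fun i _ => ENNReal.summable]
        refine Finset.sum_le_sum fun i hi => ?_
        rw [ENNReal.tsum_mul_left]
        gcongr
        exact tsum_ofReal_treeWt_le_one (ht₀ i) h₁ (htilt i hi).1 (htilt i hi).2 hs₁ hs₁1
    _ = ENNReal.ofReal (∑ i ∈ I, Real.exp (-s i)) := by
        simp only [mul_one]
        exact (ENNReal.ofReal_sum_of_nonneg fun i _ => (Real.exp_pos _).le).symm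

theorem hasSum_tilt0_geometric {p f a b : ℝ} (h0 : 0 ≤ f * Real.exp b)
    (h1 : f * Real.exp b < 1) :
    HasSum (tilt0 (fun k => p * f ^ k) a b)
      (p * (Real.exp a - 1) + p * (1 - f * Real.exp b)⁻¹) := by
  convert (hasSum_ite_eq 0 (p * (Real.exp a - 1))).add
    ((hasSum_geometric_of_lt_one h0 h1).mul_left p) using 1
  funext k
  rcases k with _ | k
  · simp [tilt0]
    ring
  · simp only [tilt0, Nat.add_one_ne_zero, if_false, zero_add, mul_comm b, Real.exp_nat_mul,
      mul_pow]
    ring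

/-- For the geometric law `p (1-p)^k`, the tilt `b = -geomTilt p a` on the number of children
exactly compensates the tilt `a` on leaves (`hasSum_tilt0_geomTilt`). -/
def geomTilt (p a : ℝ) : ℝ :=
  Real.log ((1 - p) * (1 + p - p * Real.exp a) / (1 - p * Real.exp a))

theorem hasSum_tilt0_geomTilt {p a : ℝ} (hp0 : 0 < p) (hp1 : p < 1)
    (ha : p * Real.exp a < 1) :
    HasSum (tilt0 (fun k => p * (1 - p) ^ k) a (-geomTilt p a)) 1 := by
  have hq : 0 < 1 - p := by linarith
  have hx : 0 < 1 - p * Real.exp a := by linarith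
  have hy : 0 < 1 + p - p * Real.exp a := by linarith
  have hD : 0 < (1 - p) * (1 + p - p * Real.exp a) / (1 - p * Real.exp a) :=
    div_pos (mul_pos hq hy) hx
  have hr : (1 - p) * Real.exp (-geomTilt p a) =
      (1 - p * Real.exp a) / (1 + p - p * Real.exp a) := by
    rw [geomTilt, Real.exp_neg, Real.exp_log hD]
    field_simp
  convert hasSum_tilt0_geometric (p := p) (a := a) (hr ▸ div_nonneg hx.le hy.le)
    (hr ▸ (div_lt_one hy).mpr (by linarith)) using 1
  have hr' : 1 - (1 - p * Real.exp a) / (1 + p - p * Real.exp a) =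
      p / (1 + p - p * Real.exp a) := by
    field_simp
    ring
  rw [hr, hr', inv_div, mul_div_cancel₀ _ hp0.ne']
  ring

theorem eventually_exp_sub_one_div_le {p : ℝ} (hp0 : 0 ≤ p) (hp1 : p < 1) :
    ∀ᶠ a in 𝓝 (0 : ℝ), p * Real.exp a < 1 ∧
      (Real.exp a - 1) / (1 - p * Real.exp a) ≤ a / (1 - p) + 8 / (1 - p) ^ 2 * a ^ 2 := by
  have hlim : Tendsto (fun a => 1 - p * Real.exp a) (𝓝 0) (𝓝 (1 - p)) :=
    (by fun_prop : Continuous fun a : ℝ => 1 - p * Real.exp a).tendsto' 0 _ (by simp)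
  filter_upwards [hlim.eventually (lt_mem_nhds (show (1 - p) / 2 < 1 - p by linarith)),
    Icc_mem_nhds (by norm_num : (-1 : ℝ) < 0) one_pos] with a hden ha
  refine ⟨by linarith, ?_⟩
  set D := 1 - p * Real.exp a
  set N := (Real.exp a - 1 - a) + p * (a * Real.exp a - Real.exp a + 1)
  have hq : 0 < 1 - p := by linarith
  have h1 := Real.abs_exp_sub_one_sub_id_le (abs_le.mpr ha)
  have h2 := Real.abs_exp_sub_one_sub_id_le (x := -a) (by rw [abs_neg]; exact abs_le.mpr ha)
  have hexp : Real.exp a ≤ 3 :=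
    (Real.exp_le_exp.mpr ha.2).trans (Real.exp_one_lt_d9.le.trans (by norm_num))
  have hrem : a * Real.exp a - Real.exp a + 1 ≤ 3 * a ^ 2 := by
    have hid : a * Real.exp a - Real.exp a + 1 = Real.exp a * (Real.exp (-a) - 1 - -a) := by
      rw [mul_sub, mul_sub, ← Real.exp_add]
      simp only [add_neg_cancel, Real.exp_zero]
      ring
    rw [hid]
    nlinarith [abs_le.mp h2, Real.exp_pos a]
  have hN : N ≤ 4 * a ^ 2 := by
    nlinarith [abs_le.mp h1, mul_le_mul_of_nonneg_left hrem hp0]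
  have hsplit : (Real.exp a - 1) / D = a / (1 - p) + N / ((1 - p) * D) := by
    have hD : D ≠ 0 := by linarith
    field_simp
    simp only [D, N]
    ring
  rw [hsplit, add_le_add_iff_left]
  calc N / ((1 - p) * D) ≤ 4 * a ^ 2 / ((1 - p) * ((1 - p) / 2)) :=
        div_le_div₀ (by positivity) hN (by positivity)
          (mul_le_mul_of_nonneg_left hden.le hq.le)
    _ = 8 / (1 - p) ^ 2 * a ^ 2 := by
        field_simp
        ring

theorem eventually_geomTilt_le {p : ℝ} (hp0 : 0 ≤ p) (hp1 : p < 1) :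
    ∀ᶠ a in 𝓝 (0 : ℝ), p * Real.exp a < 1 ∧
      geomTilt p a ≤ p ^ 2 / (1 - p) * a + 8 * p ^ 2 / (1 - p) ^ 2 * a ^ 2 := by
  filter_upwards [eventually_exp_sub_one_div_le hp0 hp1] with a ⟨ha, hle⟩
  refine ⟨ha, ?_⟩
  have hx : 0 < 1 - p * Real.exp a := by linarith
  have hD : 0 < (1 - p) * (1 + p - p * Real.exp a) / (1 - p * Real.exp a) :=
    div_pos (mul_pos (by linarith) (by linarith)) hx
  have hD1 : (1 - p) * (1 + p - p * Real.exp a) / (1 - p * Real.exp a) - 1 =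
      p ^ 2 * ((Real.exp a - 1) / (1 - p * Real.exp a)) := by
    field_simp
    ring
  calc geomTilt p a ≤ p ^ 2 * ((Real.exp a - 1) / (1 - p * Real.exp a)) :=
        hD1 ▸ Real.log_le_sub_one_of_pos hD
    _ ≤ p ^ 2 * (a / (1 - p) + 8 / (1 - p) ^ 2 * a ^ 2) :=
        mul_le_mul_of_nonneg_left hle (sq_nonneg p)
    _ = _ := by ring

theorem tP_abs_leaves_sub_gt_le {p : ℝ} (hp0 : 0 < p) (hp1 : p < 1) {μ₁ : ℕ → ℝ}
    (h₁ : ∀ k, 0 ≤ μ₁ k) (hμ₁ : HasSum μ₁ 1) {lam t C : ℝ} (hlam : 0 < lam) (n : ℕ)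
    (hpos : p * Real.exp lam < 1 ∧ geomTilt p lam ≤ p ^ 2 / (1 - p) * lam + C * lam ^ 2)
    (hneg : p * Real.exp (-lam) < 1 ∧
      geomTilt p (-lam) ≤ p ^ 2 / (1 - p) * -lam + C * (-lam) ^ 2) :
    tP (fun k => p * (1 - p) ^ k) μ₁
        (fun T => |((leaves0 T).card : ℝ) - p ^ 2 / (1 - p) * n| > t ∧ t1card T = n) ≤
      2 * Real.exp (-(lam * t) + C * lam ^ 2 * n) := by
  set c := p ^ 2 / (1 - p)
  have htilt : ∀ a ∈ ({lam, -lam} : Finset ℝ),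
      p * Real.exp a < 1 ∧ geomTilt p a ≤ c * a + C * lam ^ 2 := by
    simp only [Finset.mem_insert, Finset.mem_singleton]
    rintro a (rfl | rfl)
    exacts [hpos, by simpa using hneg]
  calc _ ≤ ∑ a ∈ {lam, -lam}, Real.exp (-(lam * t + c * a * n - geomTilt p a * n)) := by
        refine tP_le_sum_exp_neg _ id (fun a => -geomTilt p a) _
          (fun k => mul_nonneg hp0.le (pow_nonneg (by linarith) k)) h₁ hμ₁.summable hμ₁.tsum_eq.le
          (fun a ha => ?_) fun T _ hT => ?_
        · have h := hasSum_tilt0_geomTilt hp0 hp1 (htilt a ha).1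
          exact ⟨h.summable, h.tsum_eq.le⟩
        · obtain ⟨hdev, hn⟩ := hT
          rw [hn]
          rcases le_or_gt 0 (((leaves0 T).card : ℝ) - c * n) with h | h
          · refine ⟨lam, by simp, ?_⟩
            rw [abs_of_nonneg h] at hdev
            simp only [id]
            nlinarith
          · refine ⟨-lam, by simp, ?_⟩
            rw [abs_of_neg h] at hdev
            simp only [id]
            nlinarith
    _ ≤ ∑ _a ∈ ({lam, -lam} : Finset ℝ), Real.exp (-(lam * t) + C * lam ^ 2 * n) := by
        refine Finset.sum_le_sum fun a ha => Real.exp_le_exp.mpr ?_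
        nlinarith [mul_le_mul_of_nonneg_right (htilt a ha).2 n.cast_nonneg]
    _ ≤ 2 * Real.exp (-(lam * t) + C * lam ^ 2 * n) := by
        rw [Finset.sum_const, nsmul_eq_mul]
        gcongr
        exact_mod_cast Finset.card_le_two

namespace RegCrit

variable {q : ℕ → ℝ} {Z : ℝ}

theorem summable (hq : RegCrit q Z) :
    Summable fun k : ℕ => (Ncoef (k + 1) : ℝ) * q (k + 1) * Z ^ k := by
  obtain ⟨R, hZR, hR⟩ := hq.regular
  refine hR.of_nonneg_of_le (fun k => ?_) fun k => ?_
  · have := hq.nonneg (k + 1)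
    have := hq.Zpos
    positivity
  · have := hq.nonneg (k + 1)
    gcongr
    exact hq.Zpos.le

theorem fq_pos (hq : RegCrit q Z) : 0 < fq q Z := by
  obtain ⟨i, hi, hqi⟩ := hq.some_pos
  have hN : 0 < Ncoef i := Nat.choose_pos (by omega)
  refine lt_of_lt_of_le ?_ (hq.summable.le_tsum (i - 1) fun k _ => ?_)
  · rw [Nat.sub_add_cancel (by omega : 1 ≤ i)]
    have := hq.Zpos
    positivity
  · have := hq.nonneg (k + 1)
    have := hq.Zpos
    positivity

theorem inv_lt_one (hq : RegCrit q Z) : Z⁻¹ < 1 := by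
  have := hq.fq_pos
  rw [hq.fixedPoint, one_div] at this
  linarith

theorem mu0_eq (hq : RegCrit q Z) : mu0 q Z = fun k => Z⁻¹ * (1 - Z⁻¹) ^ k := by
  funext k
  rw [mu0, hq.fixedPoint, one_div]

theorem mu1_nonneg (hq : RegCrit q Z) (k : ℕ) : 0 ≤ mu1 q Z k := by
  have := hq.nonneg (k + 1)
  have := hq.Zpos
  have := hq.fq_pos
  unfold mu1
  positivity

theorem hasSum_mu1 (hq : RegCrit q Z) : HasSum (mu1 q Z) 1 := by
  have h : HasSum (fun k => (Ncoef (k + 1) : ℝ) * q (k + 1) * Z ^ k / fq q Z)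
      (fq q Z / fq q Z) := hq.summable.hasSum.div_const _
  rw [div_self hq.fq_pos.ne'] at h
  convert h using 1
  funext k
  rw [mu1]
  ring

/-- Criticality `Z² f_q'(Z) = 1` pins down the mean `m₁ = 1 / (Z f_q(Z))`. -/
theorem meanMu1_mul_mu0_zero (hq : RegCrit q Z) :
    meanMu1 q Z * mu0 q Z 0 = Z⁻¹ ^ 2 / (1 - Z⁻¹) := by
  have hZ := hq.Zpos.ne'
  have hmean : meanMu1 q Z = fq' q Z * (Z / fq q Z) := by
    rw [meanMu1, fq', ← tsum_mul_right]
    refine tsum_congr fun k => ?_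
    rcases k with _ | k
    · simp
    · rw [mu1, Nat.add_sub_cancel, pow_succ]
      field_simp
  have hfq' : fq' q Z = (Z ^ 2)⁻¹ := eq_inv_of_mul_eq_one_right hq.critical
  rw [hmean, hfq', mu0, hq.fixedPoint, one_div]
  have : 1 - Z⁻¹ ≠ 0 := (sub_pos.mpr hq.inv_lt_one).ne'
  field_simp

end RegCrit

theorem two_mul_exp_le_exp_neg {C y : ℝ} (hC : 0 < C) (hy : 4 * C + 1 ≤ y) :
    2 * Real.exp (-((2 * C * y)⁻¹ * y ^ 3) + C * (2 * C * y)⁻¹ ^ 2 * y ^ 4) ≤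
      Real.exp (-y) := by
  have hy0 : 0 < y := by linarith
  have hexpo : -((2 * C * y)⁻¹ * y ^ 3) + C * (2 * C * y)⁻¹ ^ 2 * y ^ 4 = -(y ^ 2 / (4 * C)) := by
    field_simp
    ring
  have hlog2 : Real.log 2 < 1 := by
    have := Real.log_two_lt_d9
    linarith
  have hquad : y + 1 ≤ y ^ 2 / (4 * C) := by
    rw [le_div_iff₀ (by positivity)]
    nlinarith
  rw [hexpo, ← Real.exp_log (two_pos : (0 : ℝ) < 2), ← Real.exp_add, Real.exp_le_exp]
  linarith

theorem eventually_two_mul_exp_le {C : ℝ} (hC : 0 < C) :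
    ∀ᶠ n : ℕ in atTop,
      2 * Real.exp (-((2 * C * (n : ℝ) ^ (1 / 4 : ℝ))⁻¹ * (n : ℝ) ^ ((3 : ℝ) / 4)) +
          C * (2 * C * (n : ℝ) ^ (1 / 4 : ℝ))⁻¹ ^ 2 * n) ≤
        Real.exp (-(n : ℝ) ^ (1 / 4 : ℝ)) := by
  have hy : Tendsto (fun n : ℕ => (n : ℝ) ^ (1 / 4 : ℝ)) atTop atTop :=
    (tendsto_rpow_atTop (by norm_num)).comp tendsto_natCast_atTop_atTop
  filter_upwards [hy.eventually_ge_atTop (4 * C + 1)] with n hn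
  have hn3 : (n : ℝ) ^ ((3 : ℝ) / 4) = ((n : ℝ) ^ (1 / 4 : ℝ)) ^ 3 := by
    rw [← Real.rpow_natCast, ← Real.rpow_mul n.cast_nonneg]
    norm_num
  have hn4 : (n : ℝ) = ((n : ℝ) ^ (1 / 4 : ℝ)) ^ 4 := by
    rw [← Real.rpow_natCast, ← Real.rpow_mul n.cast_nonneg]
    norm_num
  have key := two_mul_exp_le_exp_neg hC hn
  rwa [← hn3, ← hn4] at key

/-- Lemma `feuilles`:
`P_μ(|#∂₀T - m₁ μ₀(0) n| > n^{3/4}, #T¹ = n) ≤ exp(-n^{β₀})` for large `n`. -/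
theorem stmt11 (q : ℕ → ℝ) (Z : ℝ) (hq : RegCrit q Z) :
    ∃ β₀ : ℝ, 0 < β₀ ∧ ∀ᶠ n : ℕ in atTop,
      tP (mu0 q Z) (mu1 q Z)
          (fun T => |((leaves0 T).card : ℝ) - meanMu1 q Z * mu0 q Z 0 * n| >
              (n : ℝ) ^ ((3 : ℝ) / 4) ∧
            t1card T = n) ≤
        Real.exp (-(n : ℝ) ^ β₀) := by
  set p := Z⁻¹
  have hp0 : 0 < p := inv_pos.mpr hq.Zpos
  have hp1 : p < 1 := hq.inv_lt_one
  set C := 8 * p ^ 2 / (1 - p) ^ 2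
  have hC : 0 < C := div_pos (by positivity) (by nlinarith)
  have hlam : Tendsto (fun n : ℕ => (2 * C * (n : ℝ) ^ (1 / 4 : ℝ))⁻¹) atTop (𝓝 0) :=
    tendsto_inv_atTop_zero.comp <| ((tendsto_rpow_atTop (by norm_num)).comp
      tendsto_natCast_atTop_atTop).const_mul_atTop (by positivity)
  refine ⟨1 / 4, by norm_num, ?_⟩
  filter_upwards [hlam.eventually (eventually_geomTilt_le hp0.le hp1),
    (neg_zero (G := ℝ) ▸ hlam.neg).eventually (eventually_geomTilt_le hp0.le hp1),
    eventually_two_mul_exp_le hC, eventually_gt_atTop 0] with n hpos hneg hexp hn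
  rw [hq.meanMu1_mul_mu0_zero, hq.mu0_eq]
  exact (tP_abs_leaves_sub_gt_le hp0 hp1 hq.mu1_nonneg hq.hasSum_mu1 (by positivity) n hpos
    (by simpa using hneg)).trans hexp

end PaperWeill
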